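/- arXiv:1511.06954 — 9 statements merged into one kernel-verified Lean document; each statement's English description precedes it below -/
import Mathlib

section
/- If for every i in U, v_i > (Σ_{j∈U\{i}} v_j − B)/(|U|−1), then for every i in U\A (with A a proper subset of U), v_i > (Σ_{j∈A} v_j − B)/|A|. -/
open Finset

/-- Lemma 2 (move-in lemma): if every `i ∈ U` satisfies the relative valuation
constraint on `U`, then every `i ∈ U \ A` satisfies it with respect to the
proper subset `A`. -/
theorem stmt0 {α : Type*} [DecidableEq α] (N U A : Finset α) (v : α → ℝ) (B : ℝ)
    (hB : 0 < B) (hvpos : ∀ i ∈ N, 0 < v i)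
    (hUN : U ⊆ N) (hAU : A ⊂ U) (hA : A.Nonempty) (hU : 2 ≤ U.card)
    (h : ∀ i ∈ U, (∑ j ∈ U.erase i, v j - B) / ((U.card : ℝ) - 1) < v i) :
    ∀ i ∈ U \ A, (∑ j ∈ A, v j - B) / (A.card : ℝ) < v i := by
  intro i hi
  obtain ⟨hiU, hiA⟩ := Finset.mem_sdiff.mp hi
  have hn2 : (2:ℝ) ≤ (U.card : ℝ) := by exact_mod_cast hU
  have hnpos : (0:ℝ) < (U.card : ℝ) := by linarith
  have hAsub : A ⊆ U := hAU.subset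
  -- key: each j ∈ U has S_U - B < |U| * v j
  have key : ∀ j ∈ U, (∑ k ∈ U, v k - B) < (U.card : ℝ) * v j := by
    intro j hj
    have h1 := h j hj
    have he : ∑ k ∈ U.erase j, v k = ∑ k ∈ U, v k - v j :=
      Finset.sum_erase_eq_sub hj
    rw [he, div_lt_iff₀ (by linarith : (0:ℝ) < (U.card : ℝ) - 1)] at h1
    nlinarith
  have hUA : (U \ A).Nonempty := ⟨i, hi⟩
  have hsum : ∑ _j ∈ U \ A, (∑ k ∈ U, v k - B) < ∑ j ∈ U \ A, (U.card : ℝ) * v j :=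
    Finset.sum_lt_sum_of_nonempty hUA (fun j hj =>
      key j (Finset.mem_sdiff.mp hj).1)
  rw [Finset.sum_const, nsmul_eq_mul, ← Finset.mul_sum] at hsum
  have hcard : ((U \ A).card : ℝ) = (U.card : ℝ) - (A.card : ℝ) :=
    Finset.cast_card_sdiff hAsub
  have hsplit : ∑ j ∈ U \ A, v j + ∑ j ∈ A, v j = ∑ j ∈ U, v j :=
    Finset.sum_sdiff hAsub
  have hapos : (0:ℝ) < (A.card : ℝ) := by
    exact_mod_cast hA.card_pos
  have haltn : (A.card : ℝ) < (U.card : ℝ) := by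
    exact_mod_cast Finset.card_lt_card hAU
  rw [div_lt_iff₀ hapos]
  have hki := key i hiU
  rw [hcard] at hsum
  nlinarith [mul_lt_mul_of_pos_left hki hapos, hnpos, hsum,
    mul_pos hnpos hapos]
end

section
/- In a pricing game with an additive, budget-constrained buyer (utility v(S) − p(S) if p(S) ≤ B, else −∞, buyer picks a utility-maximizing affordable set), if the relative valuation constraint holds for N and Σ_i v_i > B, then the price vector p_i = (B + (n−1)v_i − Σ_{j≠i} v_j)/n is a pure Nash equilibrium in which the buyer purchases all items. -/
open Finset

/-- Total price of a bundle `S`. -/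
def price {n : ℕ} (p : Fin n → ℝ) (S : Finset (Fin n)) : ℝ := ∑ i ∈ S, p i

/-- Additive valuation induced by item values. -/
def addVal {n : ℕ} (v : Fin n → ℝ) (S : Finset (Fin n)) : ℝ := ∑ i ∈ S, v i

/-- `S` is a utility-maximizing affordable bundle for the budgeted buyer:
it is within budget and has utility `v S - p S` at least that of every other
affordable bundle (unaffordable bundles have utility `-∞`). -/
def demandOpt {n : ℕ} (v : Finset (Fin n) → ℝ) (B : ℝ) (p : Fin n → ℝ)
    (S : Finset (Fin n)) : Prop :=
  price p S ≤ B ∧ ∀ T : Finset (Fin n), price p T ≤ B → v T - price p T ≤ v S - price p S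

/-- Seller `i`'s utility: the posted price if the item is bought, else `0`. -/
def sellerUtil {n : ℕ} (p : Fin n → ℝ) (S : Finset (Fin n)) (i : Fin n) : ℝ :=
  if i ∈ S then p i else 0

/-- `p` is a pure Nash equilibrium of the pricing game with buyer-choice
function `X`: no seller can strictly gain by unilaterally changing
her (nonnegative) price. -/
def isPNE {n : ℕ} (v : Finset (Fin n) → ℝ) (B : ℝ)
    (X : (Fin n → ℝ) → Finset (Fin n)) (p : Fin n → ℝ) : Prop :=
  ∀ i : Fin n, ∀ q : ℝ, 0 ≤ q →
    sellerUtil (Function.update p i q) (X (Function.update p i q)) i ≤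
      sellerUtil p (X p) i

/-- Theorem 1 (existence part): under the relative valuation constraint the
equal-utility price vector is a PNE in which the buyer purchases all items. -/
theorem stmt3 (n : ℕ) (hn : 2 ≤ n) (v : Fin n → ℝ) (B : ℝ) (hB : 0 < B)
    (hv : ∀ i, 0 < v i) (hsum : B < ∑ i, v i)
    (hrvc : ∀ i, (∑ j ∈ Finset.univ.erase i, v j - B) / ((n : ℝ) - 1) < v i)
    (p : Fin n → ℝ)
    (hp : ∀ i, p i = (B + ((n : ℝ) - 1) * v i - ∑ j ∈ Finset.univ.erase i, v j) / n)
    (X : (Fin n → ℝ) → Finset (Fin n))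
    (hX : ∀ q, demandOpt (addVal v) B q (X q)) :
    X p = Finset.univ ∧ isPNE (addVal v) B X p := by
  set V := ∑ i, v i with hV
  set c := (V - B) / n with hc
  have hn2 : (2:ℝ) ≤ (n:ℝ) := by exact_mod_cast hn
  have hnpos : (0:ℝ) < n := by linarith
  have hne : (n:ℝ) ≠ 0 := ne_of_gt hnpos
  have hc0 : 0 < c := div_pos (by linarith) hnpos
  have hnc : (n:ℝ) * c = V - B := by rw [hc]; field_simp
  have herase : ∀ i : Fin n, ∑ j ∈ Finset.univ.erase i, v j = V - v i := fun i =>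
    Finset.sum_erase_eq_sub (mem_univ i)
  have hpc : ∀ i, p i = v i - c := by
    intro i
    rw [hp i, herase i, hc]
    field_simp
    ring
  have hci : ∀ i, c < v i := by
    intro i
    have h := hrvc i
    rw [herase i] at h
    have h1 : (0:ℝ) < (n:ℝ) - 1 := by linarith
    rw [div_lt_iff₀ h1] at h
    rw [hc, div_lt_iff₀ hnpos]
    nlinarith
  have hp0 : ∀ i, 0 < p i := fun i => by rw [hpc i]; linarith [hci i]
  have hcard : ∀ S : Finset (Fin n), addVal v S - price p S = (S.card : ℝ) * c := by
    intro S
    simp only [price, addVal]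
    rw [Finset.sum_congr rfl (fun i _ => hpc i), Finset.sum_sub_distrib,
      Finset.sum_const, nsmul_eq_mul]
    ring
  have hVuniv : addVal v (univ : Finset (Fin n)) = V := rfl
  have hBuniv : price p (univ : Finset (Fin n)) = B := by
    have := hcard (univ : Finset (Fin n))
    rw [hVuniv, Finset.card_univ, Fintype.card_fin] at this
    linarith
  have hXp : X p = univ := by
    obtain ⟨h1, h2⟩ := hX p
    have h3 := h2 univ (le_of_eq hBuniv)
    have h4 := hcard (X p)
    rw [hVuniv, hBuniv] at h3
    have h5 : (n:ℝ) * c ≤ ((X p).card : ℝ) * c := by linarith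
    have h6 : (n:ℝ) ≤ ((X p).card : ℝ) := le_of_mul_le_mul_right (by linarith) hc0
    have h7 : n ≤ (X p).card := by exact_mod_cast h6
    refine Finset.eq_univ_of_card _ (le_antisymm ?_ ?_)
    · simpa using Finset.card_le_univ (X p)
    · simpa using h7
  refine ⟨hXp, ?_⟩
  intro i q hq
  set p' := Function.update p i q with hp'
  have hupd : ∀ T : Finset (Fin n), i ∉ T → price p' T = price p T := by
    intro T hT
    refine Finset.sum_congr rfl fun j hj => ?_
    exact Function.update_of_ne (ne_of_mem_of_not_mem hj hT) q p
  have hgoalR : sellerUtil p (X p) i = p i := by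
    rw [hXp, sellerUtil, if_pos (mem_univ i)]
  rw [hgoalR]
  by_cases hiS : i ∈ X p'
  · rw [sellerUtil, if_pos hiS]
    by_contra hlt
    push_neg at hlt
    have hpq : p' i = q := Function.update_self i q p
    rw [hpq] at hlt
    obtain ⟨h1, h2⟩ := hX p'
    -- price of chosen bundle under p'
    have hps : price p' (X p') = q + price p ((X p').erase i) := by
      have h0 : price p' (X p') = p' i + price p' ((X p').erase i) :=
        (Finset.add_sum_erase _ p' hiS).symm
      rw [h0, hupd _ (Finset.notMem_erase i _), hpq]
    have haS : addVal v (X p') = v i + addVal v ((X p').erase i) :=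
      (Finset.add_sum_erase _ _ hiS).symm
    -- the comparison bundle: everything except i
    have hT0p : price p (Finset.univ.erase i) = B - p i := by
      have := Finset.sum_erase_eq_sub (f := p) (mem_univ i)
      rw [price, this]
      have : (∑ j, p j) = B := hBuniv
      rw [this]
    have hT0p' : price p' (Finset.univ.erase i) = B - p i := by
      rw [hupd _ (Finset.notMem_erase i _), hT0p]
    have hT0v : addVal v (Finset.univ.erase i) = V - v i := herase i
    have h3 := h2 (Finset.univ.erase i) (by rw [hT0p']; linarith [hp0 i])
    rw [hT0p', hT0v, hps, haS] at h3
    have h4 := hcard ((X p').erase i)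
    have hecard : (((X p').erase i).card : ℝ) + 1 = ((X p').card : ℝ) := by
      exact_mod_cast Finset.card_erase_add_one hiS
    -- h3 : V - v i - (B - p i) ≤ v i + addVal erase - (q + price p erase)
    have hvq : v i - q < c := by have := hpc i; linarith
    -- derive (n:ℝ) < ecard + 2
    have h5 : (n:ℝ) < (((X p').erase i).card : ℝ) + 2 := by
      have hpci := hpc i
      nlinarith [hnc, hc0]
    have h6 : n < ((X p').erase i).card + 2 := by exact_mod_cast h5
    have h7 : n ≤ (X p').card := by
      have := Finset.card_erase_add_one hiS
      omega
    have hSuniv : X p' = univ := by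
      refine Finset.eq_univ_of_card _ (le_antisymm ?_ ?_)
      · simpa using Finset.card_le_univ (X p')
      · simpa using h7
    rw [hSuniv] at hps h1
    have : price p ((univ : Finset (Fin n)).erase i) = B - p i := hT0p
    rw [hps, this] at h1
    linarith
  · rw [sellerUtil, if_neg hiS]
    linarith [hp0 i]
end

section
/- If L is the PNE base set (constructed greedily by adding items in non-increasing order of value while v_i > (Σ_{j∈L} v_j − B)/|L|) and L ≠ N, then Σ_{i∈L} v_i > B. -/
open Finset

/-- Lemma 3: if the greedy PNE base set `L = {0, …, k-1}` (items sorted in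
non-increasing order of value, greedily added while
`v i > (∑_{j ∈ L'} v j - B)/|L'|`, stopping at item `k`) is not all of `N`,
then `∑_{i ∈ L} v i > B`. -/
theorem stmt4 (n : ℕ) (v : Fin n → ℝ) (B : ℝ) (hB : 0 < B)
    (hv : ∀ i, 0 < v i) (hsorted : ∀ i j : Fin n, i ≤ j → v j ≤ v i)
    (hsum : B < ∑ i, v i)
    (k : ℕ) (hk1 : 1 ≤ k) (hkn : k < n)
    (L : Finset (Fin n)) (hL : L = Finset.univ.filter (fun i => i.val < k))
    (hgrow : ∀ i : Fin n, 0 < i.val → i.val < k →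
      (∑ j ∈ Finset.univ.filter (fun j : Fin n => j.val < i.val), v j - B) / (i.val : ℝ) < v i)
    (hstop : ∀ i : Fin n, i.val = k → v i ≤ (∑ j ∈ L, v j - B) / (k : ℝ)) :
    B < ∑ i ∈ L, v i := by
  have h := hstop ⟨k, hkn⟩ rfl
  have hpos := hv ⟨k, hkn⟩
  have hk0 : (0:ℝ) < (k:ℝ) := by exact_mod_cast hk1
  have : 0 < (∑ j ∈ L, v j - B) / (k : ℝ) := lt_of_lt_of_le hpos h
  have := (div_pos_iff.mp this)
  rcases this with ⟨h1, _⟩ | ⟨_, h2⟩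
  · linarith
  · linarith
end

section
/- The PNE base set L satisfies the relative valuation constraint internally: for every j ∈ L, v_j > (Σ_{k∈L\{j}} v_k − B)/(|L|−1). -/
open Finset

/-- Lemma 4: the greedy PNE base set `L = {0, …, k-1}` satisfies the relative
valuation constraint internally. -/
theorem stmt5 (n : ℕ) (v : Fin n → ℝ) (B : ℝ) (hB : 0 < B)
    (hv : ∀ i, 0 < v i) (hsorted : ∀ i j : Fin n, i ≤ j → v j ≤ v i)
    (hsum : B < ∑ i, v i)
    (k : ℕ) (hk2 : 2 ≤ k) (hkn : k ≤ n)
    (L : Finset (Fin n)) (hL : L = Finset.univ.filter (fun i => i.val < k))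
    (hgrow : ∀ i : Fin n, 0 < i.val → i.val < k →
      (∑ j ∈ Finset.univ.filter (fun j : Fin n => j.val < i.val), v j - B) / (i.val : ℝ) < v i) :
    ∀ j ∈ L, (∑ m ∈ L.erase j, v m - B) / ((L.card : ℝ) - 1) < v j := by
  have hcard : L.card = k := by
    have : L = (Finset.univ : Finset (Fin k)).map (Fin.castLEEmb hkn) := by
      rw [hL]; ext i
      simp only [Finset.mem_filter, Finset.mem_univ, true_and, Finset.mem_map,
        Fin.castLEEmb_apply]
      constructor
      · intro h; exact ⟨⟨i.val, h⟩, by ext; simp⟩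
      · rintro ⟨b, rfl⟩; exact b.isLt
    rw [this, Finset.card_map, Finset.card_univ, Fintype.card_fin]
  set S := ∑ m ∈ L, v m with hS
  have hlastlt : k - 1 < n := by omega
  set last : Fin n := ⟨k - 1, hlastlt⟩ with hlast
  have hlast_mem : last ∈ L := by rw [hL]; simp [hlast]; omega
  have hkey := hgrow last (by simp [hlast]; omega) (by simp [hlast]; omega)
  have hfilter : Finset.univ.filter (fun j : Fin n => j.val < last.val) = L.erase last := by
    ext i
    simp only [Finset.mem_filter, Finset.mem_univ, true_and, Finset.mem_erase, hL, hlast,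
      Fin.ext_iff, Fin.val_mk]
    show i.val < last.val ↔ _
    rw [hlast]
    simp only [Fin.val_mk]
    constructor
    · intro h
      refine ⟨fun he => ?_, by omega⟩
      have : i.val = k - 1 := by rw [he]
      omega
    · rintro ⟨h1, h2⟩
      rcases Nat.lt_or_ge i.val (k - 1) with h | h
      · exact h
      · exfalso; exact h1 (Fin.ext (show i.val = k - 1 by omega))
  rw [hfilter] at hkey
  have herase_last : ∑ m ∈ L.erase last, v m = S - v last := by
    rw [Finset.sum_erase_eq_sub hlast_mem]
  rw [herase_last] at hkey
  have hk1pos : (0 : ℝ) < (k : ℝ) - 1 := by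
    have : (2 : ℝ) ≤ (k : ℝ) := by exact_mod_cast hk2
    linarith
  have hkval : ((last.val : ℕ) : ℝ) = (k : ℝ) - 1 := by
    simp [hlast]
    push_cast [Nat.cast_sub (by omega : 1 ≤ k)]
    ring
  rw [hkval] at hkey
  have hkey' : S - v last - B < ((k : ℝ) - 1) * v last := by
    linarith [(div_lt_iff₀ hk1pos).mp hkey]
  intro j hj
  have hjk : j.val < k := by rw [hL] at hj; simpa using hj
  have hvle : v last ≤ v j := hsorted j last (by simp [Fin.le_def, hlast]; omega)
  have herase_j : ∑ m ∈ L.erase j, v m = S - v j := Finset.sum_erase_eq_sub hj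
  rw [herase_j, hcard]
  rw [div_lt_iff₀ hk1pos]
  nlinarith [hk1pos, hvle]
end

section
/- The PNE base set L is the unique maximal subset S of N satisfying: for all i ∈ S, v_i > (Σ_{j∈S\{i}} v_j − B)/(|S|−1). That is, any set M satisfying this constraint with L ⊆ M must equal L. -/
open Finset

/-- The greedy PNE base set `L` is the unique maximal set satisfying the
relative valuation constraint: any `M ⊇ L` satisfying the constraint
internally equals `L`. -/
theorem stmt6 (n : ℕ) (v : Fin n → ℝ) (B : ℝ) (hB : 0 < B)
    (hv : ∀ i, 0 < v i) (hsorted : ∀ i j : Fin n, i ≤ j → v j ≤ v i)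
    (hsum : B < ∑ i, v i)
    (k : ℕ) (hk1 : 1 ≤ k) (hkn : k ≤ n)
    (L : Finset (Fin n)) (hL : L = Finset.univ.filter (fun i => i.val < k))
    (hgrow : ∀ i : Fin n, 0 < i.val → i.val < k →
      (∑ j ∈ Finset.univ.filter (fun j : Fin n => j.val < i.val), v j - B) / (i.val : ℝ) < v i)
    (hstop : ∀ i : Fin n, i.val = k → v i ≤ (∑ j ∈ L, v j - B) / (k : ℝ)) :
    ∀ M : Finset (Fin n), L ⊆ M →
      (∀ i ∈ M, (∑ j ∈ M.erase i, v j - B) / ((M.card : ℝ) - 1) < v i) → M = L := by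
  intro M hLM hineq
  by_contra hne
  have hMLne : (M \ L).Nonempty :=
    Finset.sdiff_nonempty.2 (fun h => hne (Finset.Subset.antisymm h hLM))
  set i := (M \ L).max' hMLne with hidef
  have hiML : i ∈ M \ L := Finset.max'_mem _ _
  rw [Finset.mem_sdiff] at hiML
  obtain ⟨hiM, hiL⟩ := hiML
  have hik : k ≤ i.val := by
    by_contra h
    push_neg at h
    exact hiL (by simp [hL, h])
  have hkn' : k < n := lt_of_le_of_lt hik i.isLt
  have hvi0 : v i ≤ v ⟨k, hkn'⟩ := hsorted ⟨k, hkn'⟩ i hik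
  have hstop' := hstop ⟨k, hkn'⟩ rfl
  have hkpos : (0:ℝ) < k := by exact_mod_cast hk1
  have hkv : (k:ℝ) * v i ≤ ∑ j ∈ L, v j - B := by
    have h1 := (le_div_iff₀ hkpos).1 hstop'
    nlinarith
  have hLsub : L ⊆ M.erase i := fun j hj =>
    Finset.mem_erase.2 ⟨fun h => hiL (h ▸ hj), hLM hj⟩
  have hsumsplit : ∑ j ∈ M.erase i \ L, v j + ∑ j ∈ L, v j = ∑ j ∈ M.erase i, v j :=
    Finset.sum_sdiff hLsub
  have hcardsplit : (M.erase i \ L).card + L.card = (M.erase i).card :=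
    Finset.card_sdiff_add_card_eq_card hLsub
  have hLcard : L.card = k := by
    have hmap : L = Finset.map (Fin.castLEEmb hkn) Finset.univ := by
      rw [hL]; ext j
      simp only [Finset.mem_filter, Finset.mem_univ, true_and, Finset.mem_map,
        Fin.castLEEmb, Function.Embedding.coeFn_mk, Fin.castLE]
      constructor
      · intro hj; exact ⟨⟨j, hj⟩, by simp⟩
      · rintro ⟨a, rfl⟩; exact a.isLt
    rw [hmap, Finset.card_map, Finset.card_univ, Fintype.card_fin]
  have hEbound : (M.erase i \ L).card • v i ≤ ∑ j ∈ M.erase i \ L, v j := by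
    apply Finset.card_nsmul_le_sum
    intro j hj
    rw [Finset.mem_sdiff, Finset.mem_erase] at hj
    have hjML : j ∈ M \ L := Finset.mem_sdiff.2 ⟨hj.1.2, hj.2⟩
    exact hsorted j i (Finset.le_max' _ j hjML)
  have hMcard : M.card = (M.erase i).card + 1 := (Finset.card_erase_add_one hiM).symm
  have hposm : (0:ℝ) < ((M.erase i).card : ℝ) := by
    have hk' : k ≤ (M.erase i).card := by omega
    have : 0 < (M.erase i).card := by omega
    exact_mod_cast this
  have hmain := hineq i hiM
  rw [hMcard] at hmain
  push_cast at hmain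
  rw [add_sub_cancel_right, div_lt_iff₀ hposm] at hmain
  have hfin : ((M.erase i).card : ℝ) * v i ≤ ∑ j ∈ M.erase i, v j - B := by
    rw [nsmul_eq_mul] at hEbound
    have hc : ((M.erase i).card : ℝ) = ((M.erase i \ L).card : ℝ) + k := by
      exact_mod_cast (hLcard ▸ hcardsplit).symm
    rw [hc, add_mul]
    linarith
  linarith
end

section
/- If a pure Nash equilibrium p is market clearing (all n items are bought and every p_i > 0) in the additive budgeted pricing game, then the relative valuation constraint holds for all of N: for every i, v_i > (Σ_{j≠i} v_j − B)/(n−1). -/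
open Finset

lemma price_update_not_mem {n : ℕ} (p : Fin n → ℝ) (j : Fin n) (q : ℝ)
    (S : Finset (Fin n)) (hj : j ∉ S) :
    price (Function.update p j q) S = price p S := by
  unfold price
  exact Finset.sum_congr rfl fun k hk => Function.update_of_ne (ne_of_mem_of_not_mem hk hj) _ _

lemma price_update_mem {n : ℕ} (p : Fin n → ℝ) (j : Fin n) (δ : ℝ)
    (S : Finset (Fin n)) (hj : j ∈ S) :
    price (Function.update p j (p j + δ)) S = price p S + δ := by
  unfold price
  rw [← Finset.add_sum_erase _ _ hj, ← Finset.add_sum_erase _ p hj,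
    Function.update_self]
  have : ∑ k ∈ S.erase j, Function.update p j (p j + δ) k = ∑ k ∈ S.erase j, p k :=
    Finset.sum_congr rfl fun k hk =>
      Function.update_of_ne (Finset.ne_of_mem_erase hk) _ _
  rw [this]; ring

/-- Theorem 3 -/
theorem stmt7 (n : ℕ) (hn : 2 ≤ n) (v : Fin n → ℝ) (B : ℝ) (hB : 0 < B)
    (hv : ∀ i, 0 < v i) (hsum : B < ∑ i, v i)
    (p : Fin n → ℝ) (hppos : ∀ i, 0 < p i)
    (X : (Fin n → ℝ) → Finset (Fin n))
    (hX : ∀ q, demandOpt (addVal v) B q (X q))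
    (hPNE : isPNE (addVal v) B X p)
    (hclear : X p = Finset.univ) :
    ∀ i, (∑ j ∈ Finset.univ.erase i, v j - B) / ((n : ℝ) - 1) < v i := by
  obtain ⟨hbud, hopt⟩ := hX p
  rw [hclear] at hbud hopt
  have hPU : price p univ = ∑ i, p i := rfl
  -- Lemma 1 : p k ≤ v k
  have hple : ∀ k, p k ≤ v k := by
    intro k
    have hTB : price p (univ.erase k) ≤ B := by
      rw [price, Finset.sum_erase_eq_sub (mem_univ k)]
      have := (hppos k).le
      have := hbud
      rw [hPU] at this
      linarith
    have h := hopt (univ.erase k) hTB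
    rw [addVal, addVal, price, price, Finset.sum_erase_eq_sub (mem_univ k),
        Finset.sum_erase_eq_sub (mem_univ k)] at h
    linarith
  -- no seller stays in the bundle after raising her price
  have hnotin : ∀ (i : Fin n) (δ : ℝ), 0 < δ →
      i ∉ X (Function.update p i (p i + δ)) := by
    intro i δ hδ hmem
    have h := hPNE i (p i + δ) (by linarith [hppos i])
    rw [hclear] at h
    simp only [sellerUtil, if_pos hmem, if_pos (mem_univ i),
      Function.update_self] at h
    linarith
  -- deviation consequence
  have hdev : ∀ (i : Fin n) (δ : ℝ), 0 < δ → ∀ T : Finset (Fin n), i ∈ T →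
      price p T + δ ≤ B →
      addVal v T - price p T - δ ≤ ∑ k ∈ univ.erase i, (v k - p k) := by
    intro i δ hδ T hiT hTB
    set p' := Function.update p i (p i + δ) with hp'
    have hni : i ∉ X p' := hnotin i δ hδ
    obtain ⟨hS1, hS2⟩ := hX p'
    have hpS : price p' (X p') = price p (X p') := price_update_not_mem _ _ _ _ hni
    have hpT : price p' T = price p T + δ := price_update_mem _ _ _ _ hiT
    have h1 := hS2 T (by rw [hpT]; exact hTB)
    rw [hpT, hpS] at h1
    have h2 : addVal v (X p') - price p (X p') ≤ ∑ k ∈ univ.erase i, (v k - p k) := by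
      rw [addVal, price, ← Finset.sum_sub_distrib]
      apply Finset.sum_le_sum_of_subset_of_nonneg
      · intro x hx
        exact Finset.mem_erase.mpr ⟨fun h => hni (h ▸ hx), mem_univ x⟩
      · intro k _ _
        linarith [hple k]
    linarith
  have herase : ∀ j : Fin n, ∑ k ∈ univ.erase j, (v k - p k)
      = (∑ k, v k - ∑ k, p k) - (v j - p j) := by
    intro j
    rw [Finset.sum_erase_eq_sub (mem_univ j), Finset.sum_sub_distrib]
  -- budget binds
  have hpuB : ∑ i, p i = B := by
    by_contra hne
    have hlt : ∑ i, p i < B := lt_of_le_of_ne (hPU ▸ hbud) hne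
    have hvp : ∀ i : Fin n, v i ≤ p i := by
      intro i
      have key : ∀ ε > (0:ℝ), v i ≤ p i + ε := by
        intro ε hε
        set δ := min ε (B - ∑ i, p i) with hδdef
        have hδ : 0 < δ := lt_min hε (by linarith)
        have h := hdev i δ hδ univ (mem_univ i)
          (by rw [hPU]; have := min_le_right ε (B - ∑ i, p i); linarith)
        rw [herase i] at h
        have haV : addVal v univ = ∑ k, v k := rfl
        rw [haV, hPU] at h
        have : δ ≤ ε := min_le_left _ _
        linarith
      linarith [le_of_forall_pos_le_add key]
    have : ∑ i, v i ≤ ∑ i, p i := Finset.sum_le_sum fun i _ => hvp i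
    linarith
  -- surplus comparison: v j - p j ≤ v i - p i for all i, j
  have hsurp : ∀ i j : Fin n, v j - p j ≤ v i - p i := by
    intro i j
    rcases eq_or_ne j i with rfl | hij
    · exact le_refl _
    have key : ∀ ε > (0:ℝ), v j - p j ≤ (v i - p i) + ε := by
      intro ε hε
      set δ := min ε (p i) with hδdef
      have hδ : 0 < δ := lt_min hε (hppos i)
      have hjT : j ∈ univ.erase i := Finset.mem_erase.mpr ⟨hij, mem_univ j⟩
      have hTB : price p (univ.erase i) + δ ≤ B := by
        rw [price, Finset.sum_erase_eq_sub (mem_univ i), hpuB]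
        have := min_le_right ε (p i)
        linarith
      have h := hdev j δ hδ (univ.erase i) hjT hTB
      rw [herase j] at h
      have haT : addVal v (univ.erase i) = ∑ k, v k - v i := by
        rw [addVal, Finset.sum_erase_eq_sub (mem_univ i)]
      have hpT : price p (univ.erase i) = ∑ k, p k - p i := by
        rw [price, Finset.sum_erase_eq_sub (mem_univ i)]
      rw [haT, hpT] at h
      have : δ ≤ ε := min_le_left _ _
      linarith
    exact le_of_forall_pos_le_add key
  -- conclude
  intro i
  have hsum2 : ∑ k, v k - B ≤ (n : ℝ) * (v i - p i) := by
    have := Finset.sum_le_sum (fun k (_ : k ∈ (univ : Finset (Fin n))) => hsurp i k)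
    rw [Finset.sum_sub_distrib, Finset.sum_const, Finset.card_univ,
      Fintype.card_fin, nsmul_eq_mul] at this
    linarith [hpuB]
  have hn1 : (0:ℝ) < (n : ℝ) - 1 := by
    have : (2:ℝ) ≤ (n:ℝ) := by exact_mod_cast hn
    linarith
  rw [div_lt_iff₀ hn1, Finset.sum_erase_eq_sub (mem_univ i)]
  have hnp : 0 < (n:ℝ) * p i := by
    have : (0:ℝ) < (n:ℝ) := by linarith
    exact mul_pos this (hppos i)
  nlinarith [hsum2, hnp]
end

section
/- Any market clearing PNE in the additive budgeted game is unique and satisfies v_i − p_i = v_j − p_j for all pairs (i,j) and Σ_i p_i = B; specifically p_i = (B + (n−1)v_i − Σ_{j≠i} v_j)/n. -/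
open Finset

lemma price_mono {n : ℕ} (p : Fin n → ℝ) (hp : ∀ i, 0 ≤ p i) {S T : Finset (Fin n)}
    (h : S ⊆ T) : price p S ≤ price p T :=
  Finset.sum_le_sum_of_subset_of_nonneg h (fun i _ _ => hp i)

lemma price_insert {n : ℕ} (p : Fin n → ℝ) (S : Finset (Fin n)) (i : Fin n) (hi : i ∉ S) :
    price p (insert i S) = p i + price p S := Finset.sum_insert hi

lemma addVal_insert {n : ℕ} (v : Fin n → ℝ) (S : Finset (Fin n)) (i : Fin n) (hi : i ∉ S) :
    addVal v (insert i S) = v i + addVal v S := Finset.sum_insert hi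

lemma price_erase {n : ℕ} (p : Fin n → ℝ) (S : Finset (Fin n)) (i : Fin n) (hi : i ∈ S) :
    price p (S.erase i) = price p S - p i := by
  have := Finset.sum_erase_add S p hi
  unfold price; linarith

lemma addVal_erase {n : ℕ} (v : Fin n → ℝ) (S : Finset (Fin n)) (i : Fin n) (hi : i ∈ S) :
    addVal v (S.erase i) = addVal v S - v i := by
  have := Finset.sum_erase_add S v hi
  unfold addVal; linarith

/-- If every item with price below its value must be bought. -/
lemma mem_opt {n : ℕ} (v : Fin n → ℝ) (B : ℝ) (p' : Fin n → ℝ) (hnn : ∀ k, 0 ≤ p' k)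
    (S : Finset (Fin n)) (hS : demandOpt (addVal v) B p' S) (i : Fin n)
    (hi : p' i < v i) (htot : price p' Finset.univ ≤ B) : i ∈ S := by
  by_contra h
  have haff : price p' (insert i S) ≤ B :=
    le_trans (price_mono p' hnn (Finset.subset_univ _)) htot
  have := hS.2 (insert i S) haff
  rw [price_insert p' S i h, addVal_insert v S i h] at this
  linarith

/-- Corollary: a market clearing PNE is unique: its prices are exactly the
equal-utility prices, they sum to the budget, and buyer utilities from all
items coincide. -/
theorem stmt8 (n : ℕ) (hn : 2 ≤ n) (v : Fin n → ℝ) (B : ℝ) (hB : 0 < B)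
    (hv : ∀ i, 0 < v i) (hsum : B < ∑ i, v i)
    (p : Fin n → ℝ) (hppos : ∀ i, 0 < p i)
    (X : (Fin n → ℝ) → Finset (Fin n))
    (hX : ∀ q, demandOpt (addVal v) B q (X q))
    (hPNE : isPNE (addVal v) B X p)
    (hclear : X p = Finset.univ) :
    (∀ i, p i = (B + ((n : ℝ) - 1) * v i - ∑ j ∈ Finset.univ.erase i, v j) / n) ∧
      (∑ i, p i = B) ∧ (∀ i j, v i - p i = v j - p j) := by
  have hpnn : ∀ k, 0 ≤ p k := fun k => (hppos k).le
  have F0 : price p Finset.univ ≤ B := by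
    have := (hX p).1; rwa [hclear] at this
  have hsump : ∑ i, p i ≤ B := F0
  -- F1 : prices below values
  have F1 : ∀ i, p i ≤ v i := by
    intro i
    have haff : price p (Finset.univ.erase i) ≤ B :=
      le_trans (price_mono p hpnn (Finset.erase_subset _ _)) F0
    have h2 := (hX p).2 (Finset.univ.erase i) haff
    rw [hclear, price_erase p _ i (Finset.mem_univ i),
      addVal_erase v _ i (Finset.mem_univ i)] at h2
    linarith
  -- F2 : prices sum to budget
  have F2 : ∑ i, p i = B := by
    by_contra hne
    have hlt : ∑ i, p i < B := lt_of_le_of_ne hsump hne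
    obtain ⟨i, hi⟩ : ∃ i, p i < v i := by
      by_contra hall
      push_neg at hall
      have : ∑ i, v i ≤ ∑ i, p i := Finset.sum_le_sum (fun i _ => hall i)
      linarith
    set ε := min (B - ∑ i, p i) (v i - p i) / 2 with hεdef
    have hm1 := min_le_left (B - ∑ i, p i) (v i - p i)
    have hm2 := min_le_right (B - ∑ i, p i) (v i - p i)
    have hε0 : 0 < ε := by
      apply div_pos _ (by norm_num)
      exact lt_min (by linarith) (by linarith)
    have hε1 : 2 * ε ≤ B - ∑ i, p i := by rw [hεdef]; linarith
    have hε2 : 2 * ε ≤ v i - p i := by rw [hεdef]; linarith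
    set q := p i + ε with hqdef
    set p' := Function.update p i q with hp'def
    have hq0 : 0 ≤ q := by have := hppos i; linarith
    have hp'i : p' i = q := Function.update_self i q p
    have hp'nn : ∀ k, 0 ≤ p' k := by
      intro k
      by_cases hk : k = i
      · subst hk; rw [hp'i]; exact hq0
      · rw [hp'def, Function.update_of_ne hk]; exact hpnn k
    have hsum' : ∑ k, p' k = ∑ k, p k + ε := by
      rw [hp'def, Finset.sum_update_of_mem (Finset.mem_univ i),
        Finset.sdiff_singleton_eq_erase]
      have h := Finset.sum_erase_add Finset.univ p (Finset.mem_univ i)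
      rw [hqdef]; linarith
    have htot' : price p' Finset.univ ≤ B := by
      show ∑ k, p' k ≤ B
      rw [hsum']; linarith
    have hmem : i ∈ X p' := by
      refine mem_opt v B p' hp'nn (X p') (hX p') i ?_ htot'
      rw [hp'i]; linarith
    have hcon := hPNE i q hq0
    rw [← hp'def] at hcon
    unfold sellerUtil at hcon
    rw [if_pos hmem, hclear, if_pos (Finset.mem_univ i)] at hcon
    linarith
  -- key : no strict surplus inequality
  have key : ∀ i j, ¬ (v i - p i < v j - p j) := by
    intro i j hlt
    have hij : i ≠ j := by intro h; rw [h] at hlt; exact lt_irrefl _ hlt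
    set ε := min (p i) ((v j - p j) - (v i - p i)) / 2 with hεdef
    have hm1 := min_le_left (p i) ((v j - p j) - (v i - p i))
    have hm2 := min_le_right (p i) ((v j - p j) - (v i - p i))
    have hε0 : 0 < ε := by
      apply div_pos _ (by norm_num)
      exact lt_min (hppos i) (by linarith)
    have hε1 : 2 * ε ≤ p i := by rw [hεdef]; linarith
    have hε2 : 2 * ε ≤ (v j - p j) - (v i - p i) := by rw [hεdef]; linarith
    set q := p j + ε with hqdef
    set p' := Function.update p j q with hp'def
    have hq0 : 0 ≤ q := by have := hppos j; linarith
    have hp'j : p' j = q := Function.update_self j q p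
    have hpB : price p Finset.univ = B := F2
    have hvipi : 0 ≤ v i - p i := by have := F1 i; linarith
    have hjS : j ∈ X p' := by
      by_contra hjS
      set S := X p' with hSdef
      have hpS : price p' S = price p S := price_update_not_mem p j q S hjS
      have hSsub : S ⊆ Finset.univ.erase j :=
        fun k hk => Finset.mem_erase.2 ⟨fun h : k = j => hjS (h ▸ hk), Finset.mem_univ k⟩
      have hSB : price p S ≤ B - p j := by
        have h := price_mono p hpnn hSsub
        rw [price_erase p _ j (Finset.mem_univ j), hpB] at h
        exact h
      by_cases hiS : i ∈ S
      · -- swap i out for j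
        have hjT' : j ∉ S.erase i := fun h => hjS (Finset.mem_of_mem_erase h)
        have hpT : price p' (insert j (S.erase i)) = price p S - p i + q := by
          rw [price_insert p' _ j hjT',
            price_update_not_mem p j q _ hjT', price_erase p S i hiS, hp'j]
          ring
        have hvT : addVal v (insert j (S.erase i)) = addVal v S - v i + v j := by
          rw [addVal_insert v _ j hjT', addVal_erase v S i hiS]; ring
        have haffT : price p' (insert j (S.erase i)) ≤ B := by
          rw [hpT, hqdef]; linarith
        have hopt := (hX p').2 (insert j (S.erase i)) haffT
        rw [← hSdef, hpT, hvT, hpS, hqdef] at hopt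
        linarith
      · -- add j to S
        have hSsub2 : S ⊆ (Finset.univ.erase j).erase i := by
          intro k hk
          exact Finset.mem_erase.2 ⟨fun h : k = i => hiS (h ▸ hk), hSsub hk⟩
        have hiej : i ∈ Finset.univ.erase j :=
          Finset.mem_erase.2 ⟨hij, Finset.mem_univ i⟩
        have hSB2 : price p S ≤ B - p j - p i := by
          have h := price_mono p hpnn hSsub2
          rw [price_erase p _ i hiej, price_erase p _ j (Finset.mem_univ j), hpB] at h
          linarith
        have haffT : price p' (insert j S) ≤ B := by
          rw [price_insert p' S j hjS, hpS, hp'j, hqdef]; linarith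
        have hopt := (hX p').2 (insert j S) haffT
        rw [← hSdef, price_insert p' S j hjS, addVal_insert v S j hjS, hpS, hp'j, hqdef] at hopt
        linarith
    have hcon := hPNE j q hq0
    rw [← hp'def] at hcon
    unfold sellerUtil at hcon
    rw [if_pos hjS, hclear, if_pos (Finset.mem_univ j)] at hcon
    rw [hp'j, hqdef] at hcon
    linarith
  have F3 : ∀ i j, v i - p i = v j - p j := by
    intro i j
    rcases lt_trichotomy (v i - p i) (v j - p j) with h | h | h
    · exact absurd h (key i j)
    · exact h
    · exact absurd h (key j i)
  have hn0 : 0 < (n : ℝ) := by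
    have : 0 < n := lt_of_lt_of_le (by norm_num) hn
    exact_mod_cast this
  refine ⟨?_, F2, F3⟩
  intro i
  have hsumeq : (n : ℝ) * (v i - p i) = ∑ j, v j - B := by
    have h : ∑ j, (v j - p j) = ∑ _j : Fin n, (v i - p i) :=
      Finset.sum_congr rfl (fun j _ => F3 j i)
    rw [Finset.sum_sub_distrib, F2, Finset.sum_const, Finset.card_univ, Fintype.card_fin,
      nsmul_eq_mul] at h
    linarith
  have herase : ∑ j ∈ Finset.univ.erase i, v j = ∑ j, v j - v i := by
    have := Finset.sum_erase_add Finset.univ v (Finset.mem_univ i); linarith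
  rw [herase]
  field_simp
  ring_nf
  ring_nf at hsumeq
  linarith
end

section
/- There exists a monotone submodular valuation on 4 items and a budget where two distinct maximal sets each satisfy the relative valuation constraint (with respect to marginal values within the set); specifically the valuation of Example 2 on {a,b,c,d} with budget 0.3 has both {a,b,c} and {a,b,d} satisfying the constraint while {a,b,c,d} does not. -/
open Finset

/-- The symmetric valuation of Example 2, determined by how many of `{a,b}`
(here `{0,1}`) and of `{c,d}` (here `{2,3}`) a bundle contains. -/
noncomputable def exVal : ℕ → ℕ → ℝ
  | 0, 0 => 0
  | 1, 0 => 1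
  | 0, 1 => 1 / 2
  | 2, 0 => 3 / 2
  | 1, 1 => 3 / 2
  | 0, 2 => 1
  | 2, 1 => 7 / 4
  | 1, 2 => 1.52
  | 2, 2 => 1.76
  | _, _ => 0

/-- The valuation of Example 2 on the four items `a = 0`, `b = 1`, `c = 2`,
`d = 3`. -/
noncomputable def vEx (S : Finset (Fin 4)) : ℝ :=
  exVal (S ∩ ({0, 1} : Finset (Fin 4))).card (S ∩ ({2, 3} : Finset (Fin 4))).card

/-- The relative valuation constraint for a set `S`, with respect to the
marginal values of the items within `S`. -/
def rvc (v : Finset (Fin 4) → ℝ) (B : ℝ) (S : Finset (Fin 4)) : Prop :=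
  ∀ i ∈ S,
    ((∑ j ∈ S.erase i, (v S - v (S.erase j))) - B) / ((S.card : ℝ) - 1) <
      v S - v (S.erase i)

def wVal : ℕ → ℕ → ℤ
  | 0, 0 => 0
  | 1, 0 => 100
  | 0, 1 => 50
  | 2, 0 => 150
  | 1, 1 => 150
  | 0, 2 => 100
  | 2, 1 => 175
  | 1, 2 => 152
  | 2, 2 => 176
  | _, _ => 0

def wEx (S : Finset (Fin 4)) : ℤ :=
  wVal (S ∩ ({0, 1} : Finset (Fin 4))).card (S ∩ ({2, 3} : Finset (Fin 4))).card

lemma exVal_eq (m n : ℕ) : exVal m n = ((wVal m n : ℤ) : ℝ) / 100 := by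
  rcases m with _|_|_|m <;> rcases n with _|_|_|n <;>
    simp [exVal, wVal] <;> norm_num

lemma vEx_eq (S : Finset (Fin 4)) : vEx S = ((wEx S : ℤ) : ℝ) / 100 := exVal_eq _ _

lemma vEx_val (S : Finset (Fin 4)) (m n : ℕ)
    (hm : (S ∩ ({0, 1} : Finset (Fin 4))).card = m)
    (hn : (S ∩ ({2, 3} : Finset (Fin 4))).card = n) : vEx S = exVal m n := by
  rw [vEx, hm, hn]

lemma v012 : vEx ({0,1,2} : Finset (Fin 4)) = 7/4 := by
  rw [vEx_val _ 2 1 (by decide) (by decide)]; norm_num [exVal]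
lemma v013 : vEx ({0,1,3} : Finset (Fin 4)) = 7/4 := by
  rw [vEx_val _ 2 1 (by decide) (by decide)]; norm_num [exVal]
lemma v01 : vEx ({0,1} : Finset (Fin 4)) = 3/2 := by
  rw [vEx_val _ 2 0 (by decide) (by decide)]; norm_num [exVal]
lemma v02 : vEx ({0,2} : Finset (Fin 4)) = 3/2 := by
  rw [vEx_val _ 1 1 (by decide) (by decide)]; norm_num [exVal]
lemma v12 : vEx ({1,2} : Finset (Fin 4)) = 3/2 := by
  rw [vEx_val _ 1 1 (by decide) (by decide)]; norm_num [exVal]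
lemma v03 : vEx ({0,3} : Finset (Fin 4)) = 3/2 := by
  rw [vEx_val _ 1 1 (by decide) (by decide)]; norm_num [exVal]
lemma v13 : vEx ({1,3} : Finset (Fin 4)) = 3/2 := by
  rw [vEx_val _ 1 1 (by decide) (by decide)]; norm_num [exVal]
lemma vuniv : vEx (univ : Finset (Fin 4)) = 1.76 := by
  rw [vEx_val _ 2 2 (by decide) (by decide)]; norm_num [exVal]
lemma v123 : vEx ({1,2,3} : Finset (Fin 4)) = 1.52 := by
  rw [vEx_val _ 1 2 (by decide) (by decide)]; norm_num [exVal]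
lemma v023 : vEx ({0,2,3} : Finset (Fin 4)) = 1.52 := by
  rw [vEx_val _ 1 2 (by decide) (by decide)]; norm_num [exVal]

lemma rvc012 : rvc vEx 0.3 ({0, 1, 2} : Finset (Fin 4)) := by
  intro i hi
  rw [show (({0,1,2} : Finset (Fin 4)).card : ℝ) = 3 from by rw [(by decide : ({0,1,2} : Finset (Fin 4)).card = 3)]; norm_num]
  fin_cases hi
  · rw [show ({0,1,2} : Finset (Fin 4)).erase 0 = {1,2} from by decide,
      Finset.sum_pair (by decide),
      show ({0,1,2} : Finset (Fin 4)).erase 1 = {0,2} from by decide,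
      show ({0,1,2} : Finset (Fin 4)).erase 2 = {0,1} from by decide,
      v012, v12, v02, v01]
    norm_num
  · rw [show ({0,1,2} : Finset (Fin 4)).erase 1 = {0,2} from by decide,
      Finset.sum_pair (by decide),
      show ({0,1,2} : Finset (Fin 4)).erase 0 = {1,2} from by decide,
      show ({0,1,2} : Finset (Fin 4)).erase 2 = {0,1} from by decide,
      v012, v12, v02, v01]
    norm_num
  · rw [show ({0,1,2} : Finset (Fin 4)).erase 2 = {0,1} from by decide,
      Finset.sum_pair (by decide),
      show ({0,1,2} : Finset (Fin 4)).erase 0 = {1,2} from by decide,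
      show ({0,1,2} : Finset (Fin 4)).erase 1 = {0,2} from by decide,
      v012, v12, v02, v01]
    norm_num

lemma rvc013 : rvc vEx 0.3 ({0, 1, 3} : Finset (Fin 4)) := by
  intro i hi
  rw [show (({0,1,3} : Finset (Fin 4)).card : ℝ) = 3 from by rw [(by decide : ({0,1,3} : Finset (Fin 4)).card = 3)]; norm_num]
  fin_cases hi
  · rw [show ({0,1,3} : Finset (Fin 4)).erase 0 = {1,3} from by decide,
      Finset.sum_pair (by decide),
      show ({0,1,3} : Finset (Fin 4)).erase 1 = {0,3} from by decide,
      show ({0,1,3} : Finset (Fin 4)).erase 3 = {0,1} from by decide,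
      v013, v13, v03, v01]
    norm_num
  · rw [show ({0,1,3} : Finset (Fin 4)).erase 1 = {0,3} from by decide,
      Finset.sum_pair (by decide),
      show ({0,1,3} : Finset (Fin 4)).erase 0 = {1,3} from by decide,
      show ({0,1,3} : Finset (Fin 4)).erase 3 = {0,1} from by decide,
      v013, v13, v03, v01]
    norm_num
  · rw [show ({0,1,3} : Finset (Fin 4)).erase 3 = {0,1} from by decide,
      Finset.sum_pair (by decide),
      show ({0,1,3} : Finset (Fin 4)).erase 0 = {1,3} from by decide,
      show ({0,1,3} : Finset (Fin 4)).erase 1 = {0,3} from by decide,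
      v013, v13, v03, v01]
    norm_num

lemma not_rvc_univ : ¬ rvc vEx 0.3 (Finset.univ : Finset (Fin 4)) := by
  intro h
  have := h 2 (by decide)
  rw [show ((univ : Finset (Fin 4)).card : ℝ) = 4 from by norm_num,
    show (univ : Finset (Fin 4)).erase 2 = {0,1,3} from by decide,
    Finset.sum_insert (by decide), Finset.sum_pair (by decide),
    show (univ : Finset (Fin 4)).erase 0 = {1,2,3} from by decide,
    show (univ : Finset (Fin 4)).erase 1 = {0,2,3} from by decide,
    show (univ : Finset (Fin 4)).erase 3 = {0,1,2} from by decide,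
    vuniv, v123, v023, v012, v013] at this
  norm_num at this

/-- Example 2: a monotone submodular valuation on 4 items with budget `0.3`
for which two distinct maximal sets, `{a,b,c}` and `{a,b,d}`, satisfy the
relative valuation constraint, while the full set `{a,b,c,d}` does not. -/
theorem stmt16 :
    vEx ∅ = 0 ∧ (∀ S, 0 ≤ vEx S) ∧
      (∀ S T : Finset (Fin 4), S ⊆ T → vEx S ≤ vEx T) ∧
      (∀ S T : Finset (Fin 4), vEx (S ∪ T) + vEx (S ∩ T) ≤ vEx S + vEx T) ∧
      rvc vEx 0.3 ({0, 1, 2} : Finset (Fin 4)) ∧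
      rvc vEx 0.3 ({0, 1, 3} : Finset (Fin 4)) ∧
      ({0, 1, 2} : Finset (Fin 4)) ≠ ({0, 1, 3} : Finset (Fin 4)) ∧
      ¬ rvc vEx 0.3 (Finset.univ : Finset (Fin 4)) ∧
      (∀ S : Finset (Fin 4), ({0, 1, 2} : Finset (Fin 4)) ⊂ S → ¬ rvc vEx 0.3 S) ∧
      (∀ S : Finset (Fin 4), ({0, 1, 3} : Finset (Fin 4)) ⊂ S → ¬ rvc vEx 0.3 S) := by
  refine ⟨?_, ?_, ?_, ?_, rvc012, rvc013, by decide, not_rvc_univ, ?_, ?_⟩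
  · rw [vEx_val _ 0 0 (by decide) (by decide)]; norm_num [exVal]
  · intro S
    rw [vEx_eq]
    have := (by decide : ∀ S : Finset (Fin 4), (0:ℤ) ≤ wEx S) S
    positivity
  · intro S T h
    rw [vEx_eq, vEx_eq]
    have := (by decide : ∀ S T : Finset (Fin 4), S ⊆ T → wEx S ≤ wEx T) S T h
    have : ((wEx S : ℤ) : ℝ) ≤ ((wEx T : ℤ) : ℝ) := by exact_mod_cast this
    linarith
  · intro S T
    have := (by decide : ∀ S T : Finset (Fin 4),
      wEx (S ∪ T) + wEx (S ∩ T) ≤ wEx S + wEx T) S T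
    have : ((wEx (S ∪ T) : ℤ) : ℝ) + ((wEx (S ∩ T) : ℤ) : ℝ)
        ≤ ((wEx S : ℤ) : ℝ) + ((wEx T : ℤ) : ℝ) := by exact_mod_cast this
    rw [vEx_eq, vEx_eq, vEx_eq, vEx_eq]
    linarith
  · intro S hS
    rw [(by decide : ∀ S : Finset (Fin 4), ({0,1,2} : Finset (Fin 4)) ⊂ S → S = univ) S hS]
    exact not_rvc_univ
  · intro S hS
    rw [(by decide : ∀ S : Finset (Fin 4), ({0,1,3} : Finset (Fin 4)) ⊂ S → S = univ) S hS]
    exact not_rvc_univ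
end

section
/- For a monotone submodular valuation, in any pure Nash equilibrium the buyer purchases a set of value at least max_i v({i}); consequently, the ratio between the welfare of the best and worst equilibria is at most n. -/
open Finset

/-!
An item `i` left unsold at an equilibrium could be repriced at any small `q > 0`; the
buyer would still not take it (otherwise its seller would gain `q`), so the bundle she
then buys, still affordable at the old prices, beats `{i}` at price `q`. Comparing with her
old choice gives `v {i} ≤ v (X p) + q - price p (X p) ≤ v (X p) + q`. Subadditivity bounds
the welfare of any equilibrium by `v univ ≤ ∑ i, v {i} ≤ n · v (X p)`.
-/

theorem le_sum_singleton_of_submodular {α : Type*} [DecidableEq α] {v : Finset α → ℝ}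
    (h0 : v ∅ = 0) (hsub : ∀ S T : Finset α, v (S ∪ T) + v (S ∩ T) ≤ v S + v T)
    (S : Finset α) : v S ≤ ∑ i ∈ S, v {i} := by
  induction S using Finset.induction_on with
  | empty => simp [h0]
  | insert a S ha ih =>
    have h := hsub {a} S
    rw [← insert_eq, singleton_inter_of_notMem ha, h0] at h
    rw [sum_insert ha]
    linarith

theorem price_update_of_notMem {n : ℕ} (p : Fin n → ℝ) {i : Fin n} (q : ℝ)
    {S : Finset (Fin n)} (hi : i ∉ S) : price (Function.update p i q) S = price p S :=
  sum_congr rfl fun _ hj => Function.update_of_ne (ne_of_mem_of_not_mem hj hi) _ _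

section Equilibrium

variable {n : ℕ} {v : Finset (Fin n) → ℝ} {B : ℝ} {X : (Fin n → ℝ) → Finset (Fin n)}
  {p : Fin n → ℝ} {i : Fin n}

theorem notMem_of_isPNE_of_notMem (hPNE : isPNE v B X p) (hi : i ∉ X p) {q : ℝ}
    (hq : 0 < q) : i ∉ X (Function.update p i q) := by
  intro hmem
  have h := hPNE i q hq.le
  simp only [sellerUtil, hmem, hi, if_true, if_false, Function.update_self] at h
  linarith

theorem singleton_le_add_of_isPNE (hpnn : ∀ j, 0 ≤ p j) (hX : ∀ q, demandOpt v B q (X q))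
    (hPNE : isPNE v B X p) (hi : i ∉ X p) {q : ℝ} (hq : 0 < q) (hqB : q ≤ B) :
    v {i} ≤ v (X p) + q := by
  set p' := Function.update p i q
  have hprice : price p' (X p') = price p (X p') :=
    price_update_of_notMem p q (notMem_of_isPNE_of_notMem hPNE hi hq)
  have hsingle : price p' {i} = q := by simp [p', price]
  have hbuy_new := (hX p').2 {i} (hsingle ▸ hqB)
  have hbuy_old := (hX p).2 (X p') (hprice ▸ (hX p').1)
  have hpaid : 0 ≤ price p (X p) := sum_nonneg fun j _ => hpnn j
  rw [hsingle, hprice] at hbuy_new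
  linarith

theorem singleton_le_of_isPNE (hB : 0 < B) (hmono : ∀ S T : Finset (Fin n), S ⊆ T → v S ≤ v T)
    (hpnn : ∀ j, 0 ≤ p j) (hX : ∀ q, demandOpt v B q (X q)) (hPNE : isPNE v B X p)
    (i : Fin n) : v {i} ≤ v (X p) := by
  by_cases hi : i ∈ X p
  · exact hmono _ _ (singleton_subset_iff.2 hi)
  refine le_of_forall_pos_le_add fun ε hε => ?_
  calc v {i} ≤ v (X p) + min ε B :=
        singleton_le_add_of_isPNE hpnn hX hPNE hi (lt_min hε hB) (min_le_right ε B)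
    _ ≤ v (X p) + ε := by gcongr; exact min_le_left ε B

end Equilibrium

theorem stmt19_general (n : ℕ) (v : Finset (Fin n) → ℝ) (B : ℝ) (hB : 0 < B)
    (h0 : v ∅ = 0)
    (hmono : ∀ S T : Finset (Fin n), S ⊆ T → v S ≤ v T)
    (hsub : ∀ S T : Finset (Fin n), v (S ∪ T) + v (S ∩ T) ≤ v S + v T)
    (p : Fin n → ℝ) (hpnn : ∀ i, 0 ≤ p i)
    (X : (Fin n → ℝ) → Finset (Fin n))
    (hX : ∀ q, demandOpt v B q (X q))
    (hPNE : isPNE v B X p) :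
    (∀ i : Fin n, v {i} ≤ v (X p)) ∧
      ∀ (p' : Fin n → ℝ), (∀ i, 0 ≤ p' i) →
        ∀ X' : (Fin n → ℝ) → Finset (Fin n),
          (∀ q, demandOpt v B q (X' q)) → isPNE v B X' p' →
            v (X' p') ≤ (n : ℝ) * v (X p) := by
  have hsingle := singleton_le_of_isPNE hB hmono hpnn hX hPNE
  refine ⟨hsingle, fun p' _ X' _ _ => ?_⟩
  calc v (X' p') ≤ v univ := hmono _ _ (subset_univ _)
    _ ≤ ∑ i, v {i} := le_sum_singleton_of_submodular h0 hsub univ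
    _ ≤ ∑ _i : Fin n, v (X p) := sum_le_sum fun i _ => hsingle i
    _ = n * v (X p) := by simp

/-- For a monotone submodular valuation, at any PNE the buyer obtains a bundle
of value at least `max_i v({i})`; consequently (since submodularity gives
`v(N) ≤ n · max_i v({i})`) the welfare of any equilibrium is at most `n`
times the welfare of any other, i.e. the best/worst equilibrium welfare
ratio is at most `n`. -/
theorem stmt19 (n : ℕ) (hn : 1 ≤ n) (v : Finset (Fin n) → ℝ) (B : ℝ) (hB : 0 < B)
    (h0 : v ∅ = 0) (hnn : ∀ S, 0 ≤ v S)
    (hmono : ∀ S T : Finset (Fin n), S ⊆ T → v S ≤ v T)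
    (hsub : ∀ S T : Finset (Fin n), v (S ∪ T) + v (S ∩ T) ≤ v S + v T)
    (p : Fin n → ℝ) (hpnn : ∀ i, 0 ≤ p i)
    (X : (Fin n → ℝ) → Finset (Fin n))
    (hX : ∀ q, demandOpt v B q (X q))
    (hPNE : isPNE v B X p) :
    (∀ i : Fin n, v {i} ≤ v (X p)) ∧
      ∀ (p' : Fin n → ℝ), (∀ i, 0 ≤ p' i) →
        ∀ X' : (Fin n → ℝ) → Finset (Fin n),
          (∀ q, demandOpt v B q (X' q)) → isPNE v B X' p' →
            v (X' p') ≤ (n : ℝ) * v (X p) :=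
  stmt19_general n v B hB h0 hmono hsub p hpnn X hX hPNE
end
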